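/- (Light-cone Lemma, Lemma 3 of the paper.) Let $p^\mu$ be a nonzero light-like vector in Minkowski space $\mathbb{R}^{D-1,1}$ (so $\eta_{\mu\nu}p^\mu p^\nu=0$, $p\neq 0$). On the Fock space $\wedge_{[s]}(\mathbb{R}^D)$ with creation operators $\theta_i^\mu$ and annihilation operators $\bar\theta_i^\mu$ satisfying $[\theta_i^\mu,\bar\theta_j^\nu]_+=\delta_{ij}\eta^{\mu\nu}$, define $\bar p_i = p_\mu\theta_i^\mu$ and $\bar p_i^\dagger = p_\mu\bar\theta_i^\mu$. Let $\alpha\in\wedge^{\ell_1,\dots,\ell_s}_{[s]}(\mathbb{R}^D)$ with every $\ell_i>0$ satisfy $\bar p_i\,\alpha = 0$ and $\bar p_i^\dagger\,\alpha = 0$ for all $i\in\{1,\dots,s\}$. Then there exists $\beta\in\wedge^{\ell_1-1,\dots,\ell_s-1}_{[s]}(V_\perp)$, where $V_\perp\subset\mathbb{R}^D$ is a $(D-2)$-dimensional subspace transverse to $p$, such that $\alpha = \bar p_1\bar p_2\cdots\bar p_s\,\beta$. -/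

import Mathlib

namespace Stmt15

/-- mostly-minus Minkowski metric `η = diag(1, -1, …, -1)` -/
def mink (D : ℕ) (μ ν : Fin D) : ℝ :=
  if μ = ν then (if (μ : ℕ) = 0 then 1 else -1) else 0

/-- the Minkowski bilinear form on `ℝ^{D-1,1}` -/
def bil (D : ℕ) (u w : Fin D → ℝ) : ℝ :=
  ∑ μ : Fin D, ∑ ν : Fin D, mink D μ ν * u μ * w ν

/-- lowered components `p_μ = η_{μν} p^ν` -/
def plow (D : ℕ) (p : Fin D → ℝ) (μ : Fin D) : ℝ := ∑ ν : Fin D, mink D μ ν * p ν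

/-- components of an element of the Fock space `∧_{[s]}(ℝ^D)` of multidegree `m`:
the `i`-th factor carries `m i` antisymmetric indices. -/
abbrev MF (D s : ℕ) (m : Fin s → ℕ) := ((i : Fin s) → Fin (m i) → Fin D) → ℝ

/-- complete antisymmetry in each column (so the components define a multiform). -/
def ColAntisym {D s : ℕ} (m : Fin s → ℕ) (α : MF D s m) : Prop :=
  ∀ (i : Fin s) (σ : Equiv.Perm (Fin (m i))) (v : (j : Fin s) → Fin (m j) → Fin D),
    α (Function.update v i (fun a => v i (σ a))) = ((Equiv.Perm.sign σ : ℤ) : ℝ) * α v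

/-- `p̄ᵢ α = 0`: wedging the covector `p_μ` into the `i`-th column kills `α`. -/
def WedgeZero {D s : ℕ} (m : Fin s → ℕ) (p : Fin D → ℝ) (α : MF D s m) : Prop :=
  ∀ (i : Fin s) (v : (j : Fin s) → Fin (m j) → Fin D) (ρ : Fin D),
    (∑ σ : Equiv.Perm (Fin (m i + 1)),
      ((Equiv.Perm.sign σ : ℤ) : ℝ) *
        plow D p ((Fin.cons ρ (v i) : Fin (m i + 1) → Fin D) (σ 0)) *
        α (Function.update v i
          (fun a => (Fin.cons ρ (v i) : Fin (m i + 1) → Fin D) (σ a.succ)))) = 0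

/-- `p̄ᵢ† α = 0`: contracting `p^μ` into any slot of the `i`-th column kills `α`
(equivalently, contraction on the first slot for all index configurations). -/
def ContractZero {D s : ℕ} (m : Fin s → ℕ) (hm : ∀ i, 0 < m i) (p : Fin D → ℝ)
    (α : MF D s m) : Prop :=
  ∀ (i : Fin s) (v : (j : Fin s) → Fin (m j) → Fin D),
    (∑ μ : Fin D, p μ * α (Function.update v i (Function.update (v i) ⟨0, hm i⟩ μ))) = 0

/-- every index of `β` is transverse to the vector `w`: contracting `w^μ` into any
slot gives zero. -/
def SlotTransverse {D s : ℕ} (m : Fin s → ℕ) (w : Fin D → ℝ) (β : MF D s m) : Prop :=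
  ∀ (i : Fin s) (a : Fin (m i)) (u : (j : Fin s) → Fin (m j) → Fin D),
    (∑ μ : Fin D, w μ * β (Function.update u i (Function.update (u i) a μ))) = 0

/-- components of `p̄₁ p̄₂ ⋯ p̄ₛ β` (wedging the covector `p_μ` into every column). -/
noncomputable def wedgeAll {D s : ℕ} (ℓ : Fin s → ℕ) (hℓ : ∀ i, 0 < ℓ i)
    (p : Fin D → ℝ) (β : MF D s (fun i => ℓ i - 1)) : MF D s ℓ :=
  fun v => (∏ i : Fin s, (((ℓ i - 1).factorial : ℝ)))⁻¹ *
    ∑ σ : (i : Fin s) → Equiv.Perm (Fin (ℓ i)),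
      (∏ i : Fin s, ((Equiv.Perm.sign (σ i) : ℤ) : ℝ)) *
      (∏ i : Fin s, plow D p (v i (σ i ⟨0, hℓ i⟩))) *
      β (fun i a => v i (σ i ⟨(a : ℕ) + 1, by
        have h : (a : ℕ) < ℓ i - 1 := a.isLt
        omega⟩))

/-- the transverse hyperplane `V⊥ = {v : η(v,p) = 0, η(v,q) = 0}` -/
def perpSpace (D : ℕ) (p q : Fin D → ℝ) : Submodule ℝ (Fin D → ℝ) where
  carrier := {v | bil D v p = 0 ∧ bil D v q = 0}
  add_mem' := by
    intro a b ha hb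
    have key : ∀ u u' w : Fin D → ℝ, bil D (u + u') w = bil D u w + bil D u' w := by
      intro u u' w
      simp only [bil]
      rw [← Finset.sum_add_distrib]
      refine Finset.sum_congr rfl fun μ _ => ?_
      rw [← Finset.sum_add_distrib]
      refine Finset.sum_congr rfl fun ν _ => ?_
      simp only [Pi.add_apply]
      ring
    exact ⟨by rw [key, ha.1, hb.1, add_zero], by rw [key, ha.2, hb.2, add_zero]⟩
  zero_mem' := by
    constructor <;> simp [bil]
  smul_mem' := by
    intro c a ha
    have key : ∀ u w : Fin D → ℝ, bil D (c • u) w = c * bil D u w := by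
      intro u w
      simp only [bil, Finset.mul_sum]
      refine Finset.sum_congr rfl fun μ _ => ?_
      refine Finset.sum_congr rfl fun ν _ => ?_
      simp only [Pi.smul_apply, smul_eq_mul]
      ring
    exact ⟨by rw [key, ha.1, mul_zero], by rw [key, ha.2, mul_zero]⟩

/-! Take `q = η p / ‖p‖²` (Euclidean norm): it is null because `p` is, and `η(p, q) = 1`.
Let `β` be `α` with `q` contracted into the first slot of every column. In a single column,
contracting `q` into `p ∧ α = 0` gives `α = p ∧ ι_q α`, i.e. `α` is fixed by a linear operator
acting on that column alone. Being fixed by each of these commuting operators, `α` is fixed by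
their product, and the product applied to `α` is exactly `p̄₁ ⋯ p̄ₛ β`. The slots of `β` are
transverse to `p` because `p̄ᵢ† α = 0`, and to `q` because `q` is contracted twice into the same
antisymmetric column. -/

open Function Finset Equiv

section Combinatorics

lemma sign_cast_mul_self {R β : Type*} [Ring R] [DecidableEq β] [Fintype β] (σ : Perm β) :
    ((Perm.sign σ : ℤ) : R) * (Perm.sign σ : ℤ) = 1 := by
  rw [← Int.cast_mul, ← Units.val_mul, Int.units_mul_self, Units.val_one, Int.cast_one]

variable {β : Type*} {n : ℕ}

lemma Fin.cons_comp_swap_zero_succ (x : β) (f : Fin n → β) (j : Fin n) :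
    ((Fin.cons x f : Fin (n + 1) → β) ∘ fun a => swap 0 j.succ a.succ) = update f j x := by
  ext a
  by_cases h : a = j
  · subst h
    simp
  · rw [comp_apply, swap_apply_of_ne_of_ne (Fin.succ_ne_zero a) (Fin.succ_injective _ |>.ne h)]
    simp [h]

lemma Fin.cons_update_comp_swap (x y : β) (f : Fin n → β) (a : Fin n) :
    (Fin.cons x (update f a y) : Fin (n + 1) → β) ∘ swap 0 a.succ = Fin.cons y (update f a x) := by
  ext k
  refine Fin.cases ?_ (fun b => ?_) k
  · simp
  · by_cases h : b = a
    · subst h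
      simp [update_of_ne (Fin.succ_ne_zero b).symm]
    · rw [comp_apply, swap_apply_of_ne_of_ne (Fin.succ_ne_zero b) (Fin.succ_injective _ |>.ne h)]
      simp [h]

lemma Fin.cons_comp_succ_eq_update_comp (x : β) (f : Fin (n + 1) → β) (σ : Perm (Fin (n + 1))) :
    (Fin.cons x (fun a => f (σ a.succ)) : Fin (n + 1) → β) = update f (σ 0) x ∘ σ := by
  rw [update_comp_equiv, symm_apply_apply, ← Fin.cons_self_tail (f ∘ σ), Fin.update_cons_zero]
  rfl

/-- Group `σ` by `σ 0`; the antisymmetry of `G` absorbs the permutation of the other slots. -/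
lemma sum_perm_sign_mul_eq_factorial_mul {R : Type*} [CommRing R] (H : Fin (n + 1) → R)
    (G : (Fin n → Fin (n + 1)) → R)
    (hG : ∀ (τ : Perm (Fin n)) u, G (u ∘ τ) = (Perm.sign τ : ℤ) * G u) :
    ∑ σ : Perm (Fin (n + 1)), ((Perm.sign σ : ℤ) : R) * H (σ 0) * G (fun a => σ a.succ)
      = n.factorial * ∑ k, (if k = 0 then 1 else -1) * H k * G (fun a => swap 0 k a.succ) := by
  rw [← Equiv.sum_comp Perm.decomposeFin.symm, Fintype.sum_prod_type, mul_sum]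
  refine sum_congr rfl fun k _ => ?_
  have hterm : ∀ τ : Perm (Fin n), ((Perm.sign (Perm.decomposeFin.symm (k, τ)) : ℤ) : R)
      * H (Perm.decomposeFin.symm (k, τ) 0) * G (fun a => Perm.decomposeFin.symm (k, τ) a.succ)
      = (if k = 0 then 1 else -1) * H k * G (fun a => swap 0 k a.succ) := fun τ => by
    have hcomp : (fun a => Perm.decomposeFin.symm (k, τ) a.succ)
        = (fun a => swap 0 k a.succ) ∘ τ := by
      ext a : 1
      simp
    rw [hcomp, hG, Perm.decomposeFin.symm_sign, Perm.decomposeFin_symm_apply_zero]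
    have hsq := sign_cast_mul_self (R := R) τ
    split_ifs
    · push_cast
      linear_combination (H k * G (fun a => swap 0 k a.succ)) * hsq
    · push_cast
      linear_combination -(H k * G (fun a => swap 0 k a.succ)) * hsq
  rw [sum_congr rfl fun τ _ => hterm τ]
  simp [Fintype.card_perm]

variable {ι : Type*} [Fintype ι] [DecidableEq ι]

lemma sum_pi_perm_apply_zero {M : Type*} [AddCommMonoid M] {n : ι → ℕ}
    (F : (∀ i, Fin (n i + 1)) → M) :
    ∑ σ : ∀ i, Perm (Fin (n i + 1)), F (fun i => σ i 0) = (∏ i, (n i).factorial) • ∑ J, F J := by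
  rw [← Equiv.sum_comp (Equiv.piCongrRight fun i => Perm.decomposeFin.symm),
    ← Equiv.sum_comp (Equiv.arrowProdEquivProdArrow _ _ _).symm, Fintype.sum_prod_type, smul_sum]
  simp [Fintype.card_pi, Fintype.card_perm]

variable {R : Type*} {X : ι → Type*} [∀ i, Fintype (X i)]

lemma sum_sum_update_swap {M : Type*} [AddCommMonoid M] (j : ι) (F : (∀ i, X i) → X j → M) :
    ∑ y, ∑ x, F (update y j x) (y j) = ∑ y, ∑ x, F y x := by
  have hinv : Involutive fun yx : (∀ i, X i) × X j => (update yx.1 j yx.2, yx.1 j) := by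
    rintro ⟨y, x⟩
    simp
  simp only [← Fintype.sum_prod_type']
  exact Equiv.sum_comp hinv.toPerm fun yx => F yx.1 yx.2

variable [∀ i, DecidableEq (X i)] [CommSemiring R]

lemma eq_sum_prod_kernel (K : ∀ i, X i → X i → R) (f : (∀ i, X i) → R)
    (hf : ∀ i v, f v = ∑ x, K i (v i) x * f (update v i x)) (v : ∀ i, X i) :
    f v = ∑ y, (∏ i, K i (v i) (y i)) * f y := by
  suffices h : ∀ (T : Finset ι) v, f v =
      ∑ y, (∏ i, if i ∈ T then K i (v i) (y i) else if v i = y i then 1 else 0) * f y by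
    simpa using h univ v
  intro T
  induction T using Finset.induction_on with
  | empty =>
    intro v
    simp [prod_boole, ← funext_iff]
  | insert j T hj ih =>
    intro v
    set φ : ∀ i, X i → R := fun i x => if i ∈ T then K i (v i) x else if v i = x then 1 else 0
    have hφ : ∀ y x, ∏ i, φ i (update y j x i) = φ j x * ∏ i ∈ {j}ᶜ, φ i (y i) := by
      intro y x
      rw [Fintype.prod_eq_mul_prod_compl j, update_self]
      congr 1
      exact prod_congr rfl fun i hi => by rw [update_of_ne (by simpa using hi)]
    calc f v = ∑ y, ∑ x, (∏ i, φ i (y i)) * K j (y j) x * f (update y j x) := by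
          rw [ih v]
          refine sum_congr rfl fun y _ => ?_
          rw [hf j y, mul_sum]
          simp only [mul_assoc]
          rfl
      _ = ∑ y, ∑ x, (∏ i, φ i (update y j x i)) * K j x (y j) * f y := by
          rw [← sum_sum_update_swap j]
          simp
      _ = ∑ y, (∏ i, if i ∈ insert j T then K i (v i) (y i)
            else if v i = y i then 1 else 0) * f y := by
          refine sum_congr rfl fun y _ => ?_
          simp only [hφ, φ, if_neg hj, ite_mul, one_mul, zero_mul, sum_ite_eq, mem_univ, if_true]
          rw [Fintype.prod_eq_mul_prod_compl j, if_pos (mem_insert_self j T)]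
          have hcompl : ∏ i ∈ {j}ᶜ, (if i ∈ insert j T then K i (v i) (y i)
              else if v i = y i then 1 else 0) = ∏ i ∈ {j}ᶜ, φ i (y i) :=
            prod_congr rfl fun i hi => by
              simp only [φ, mem_insert, (by simpa using hi : i ≠ j), false_or]
          rw [hcompl]
          ring

lemma eq_sum_prod_of_eq_sum_update {M : ι → Type*} [∀ i, Fintype (M i)]
    (w : ∀ i, X i → M i → R) (g : ∀ i, X i → M i → X i) (f : (∀ i, X i) → R)
    (hf : ∀ i v, f v = ∑ a, w i (v i) a * f (update v i (g i (v i) a))) (v : ∀ i, X i) :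
    f v = ∑ a : ∀ i, M i, (∏ i, w i (v i) (a i)) * f (fun i => g i (v i) (a i)) := by
  rw [eq_sum_prod_kernel (fun i x y => ∑ a, w i x a * if g i x a = y then 1 else 0) f
    (fun i v => by rw [hf i v]; simp [sum_mul, sum_comm (γ := X i)]) v]
  simp only [Fintype.prod_sum, sum_mul]
  rw [sum_comm]
  refine sum_congr rfl fun a _ => ?_
  have hδ : ∀ y, (∀ i, g i (v i) (a i) = y i) ↔ (fun i => g i (v i) (a i)) = y :=
    fun y => funext_iff.symm
  simp only [prod_mul_distrib, prod_boole, mem_univ, true_implies, hδ, mul_assoc, ← mul_sum,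
    boole_mul, sum_ite_eq, if_true]

end Combinatorics

section Minkowski

variable {D : ℕ}

lemma mink_self_mul_self (μ : Fin D) : mink D μ μ * mink D μ μ = 1 := by
  rw [mink, if_pos rfl]
  split_ifs <;> norm_num

lemma plow_apply (p : Fin D → ℝ) (μ : Fin D) : plow D p μ = mink D μ μ * p μ := by
  rw [plow, sum_eq_single μ (fun ν _ hν => by simp [mink, Ne.symm hν])
    (fun h => absurd (mem_univ μ) h)]

lemma bil_eq_sum_mul_plow (u w : Fin D → ℝ) : bil D u w = ∑ μ, u μ * plow D w μ := by
  simp only [bil, plow, mul_sum]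
  exact sum_congr rfl fun μ _ => sum_congr rfl fun ν _ => by ring

lemma bil_comm (u w : Fin D → ℝ) : bil D u w = bil D w u := by
  simp only [bil_eq_sum_mul_plow, plow_apply]
  exact sum_congr rfl fun μ _ => by ring

lemma plow_plow (p : Fin D → ℝ) : plow D (plow D p) = p := by
  ext μ
  rw [plow_apply, plow_apply, ← mul_assoc, mink_self_mul_self, one_mul]

lemma plow_smul (c : ℝ) (p : Fin D → ℝ) : plow D (c • p) = c • plow D p := by
  ext μ
  simp only [plow_apply, Pi.smul_apply, smul_eq_mul]
  ring

lemma exists_null_bil_eq_one {p : Fin D → ℝ} (hp : p ≠ 0) (hnull : bil D p p = 0) :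
    ∃ q, bil D q q = 0 ∧ bil D p q = 1 := by
  have hpos : 0 < ∑ μ, p μ * p μ := by
    obtain ⟨μ, hμ⟩ := Function.ne_iff.mp hp
    exact sum_pos' (fun _ _ => mul_self_nonneg _) ⟨μ, mem_univ _, mul_self_pos.mpr hμ⟩
  refine ⟨(∑ μ, p μ * p μ)⁻¹ • plow D p, ?_, ?_⟩
  · rw [bil_eq_sum_mul_plow, plow_smul, plow_plow]
    rw [bil_eq_sum_mul_plow] at hnull
    calc ∑ μ, ((∑ ν, p ν * p ν)⁻¹ • plow D p) μ * ((∑ ν, p ν * p ν)⁻¹ • p) μ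
        = ((∑ ν, p ν * p ν)⁻¹) ^ 2 * ∑ μ, p μ * plow D p μ := by
          rw [mul_sum]
          exact sum_congr rfl fun μ _ => by simp only [Pi.smul_apply, smul_eq_mul]; ring
      _ = 0 := by rw [hnull, mul_zero]
  · rw [bil_eq_sum_mul_plow, plow_smul, plow_plow]
    simp only [Pi.smul_apply, smul_eq_mul, mul_left_comm _ (_ : ℝ)⁻¹, ← mul_sum]
    exact inv_mul_cancel₀ hpos.ne'

lemma finrank_perpSpace {p q : Fin D → ℝ} (hpp : bil D p p = 0) (hqq : bil D q q = 0)
    (hpq : bil D p q = 1) : Module.finrank ℝ (perpSpace D p q) = D - 2 := by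
  let L : (Fin D → ℝ) →ₗ[ℝ] ℝ × ℝ :=
    (dotProductEquiv ℝ (Fin D) (plow D p)).prod (dotProductEquiv ℝ (Fin D) (plow D q))
  have hL : ∀ v, L v = (bil D v p, bil D v q) := fun v => by
    simp [L, bil_eq_sum_mul_plow, dotProduct, mul_comm]
  have hker : perpSpace D p q = LinearMap.ker L := by
    ext v
    simp only [LinearMap.mem_ker, hL, Prod.mk_eq_zero]
    rfl
  have hsurj : Function.Surjective L := fun ⟨a, b⟩ => ⟨b • p + a • q, by
    rw [map_add, map_smul, map_smul, hL, hL, hpp, hqq, hpq, bil_comm q p, hpq]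
    simp⟩
  have h := LinearMap.finrank_range_add_finrank_ker L
  rw [LinearMap.range_eq_top.mpr hsurj, finrank_top, Module.finrank_prod,
    Module.finrank_self, Module.finrank_fin_fun, ← hker] at h
  omega

end Minkowski

section Multiforms

variable {D s : ℕ}

section Conditions

variable {m : Fin s → ℕ} {α : MF D s m}

lemma ColAntisym.apply_update_comp (hα : ColAntisym m α) (v : (i : Fin s) → Fin (m i) → Fin D)
    (i : Fin s) (w : Fin (m i) → Fin D) (τ : Perm (Fin (m i))) :
    α (update v i (w ∘ τ)) = ((Perm.sign τ : ℤ) : ℝ) * α (update v i w) := by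
  simpa [comp_def] using hα i τ (update v i w)

lemma ColAntisym.apply_update_comp_swap (hα : ColAntisym m α)
    (v : (i : Fin s) → Fin (m i) → Fin D) (i : Fin s) (w : Fin (m i) → Fin D)
    {a b : Fin (m i)} (hab : a ≠ b) : α (update v i (w ∘ swap a b)) = -α (update v i w) := by
  rw [hα.apply_update_comp, Perm.sign_swap hab]
  simp

lemma ColAntisym.apply_comp (hα : ColAntisym m α) (τ : ∀ i, Perm (Fin (m i)))
    (u : (i : Fin s) → Fin (m i) → Fin D) :
    α (fun i => u i ∘ τ i) = (∏ i, ((Perm.sign (τ i) : ℤ) : ℝ)) * α u := by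
  suffices h : ∀ T : Finset (Fin s), α (fun i => if i ∈ T then u i ∘ τ i else u i)
      = (∏ i ∈ T, ((Perm.sign (τ i) : ℤ) : ℝ)) * α u by
    simpa using h univ
  intro T
  induction T using Finset.induction_on with
  | empty => simp
  | insert j T hj ih =>
    have h : (fun i => if i ∈ insert j T then u i ∘ τ i else u i)
        = update (fun i => if i ∈ T then u i ∘ τ i else u i) j (u j ∘ τ j) := by
      ext i : 1
      by_cases hij : i = j
      · subst hij
        simp
      · simp [hij]
    rw [h, hα.apply_update_comp, update_eq_self_iff.mpr (by simp [hj]), ih, prod_insert hj,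
      mul_assoc]

lemma ContractZero.sum_mul_apply_update {hm : ∀ i, 0 < m i} {p : Fin D → ℝ}
    (hα : ColAntisym m α) (hc : ContractZero m hm p α) (v : (i : Fin s) → Fin (m i) → Fin D)
    (i : Fin s) (a : Fin (m i)) :
    ∑ μ, p μ * α (update v i (update (v i) a μ)) = 0 := by
  set z : Fin (m i) := ⟨0, hm i⟩
  have h : ∀ μ, update (v i) a μ = update (v i ∘ swap z a) z μ ∘ swap z a := fun μ => by
    rw [update_comp_equiv, comp_assoc, ← Perm.coe_mul, swap_mul_self, Perm.coe_one, comp_id,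
      symm_swap, swap_apply_left]
  simp_rw [h, hα.apply_update_comp, mul_left_comm (p _), ← mul_sum]
  have hz := hc i (update v i (v i ∘ swap z a))
  simp only [update_self, update_idem] at hz
  rw [hz, mul_zero]

/-- `ι_q (p ∧ α) = η(q,p) α - p ∧ ι_q α`, written out in the `i`-th column. -/
lemma WedgeZero.eq_sum_plow_mul (hα : ColAntisym m α) {p q : Fin D → ℝ} (hw : WedgeZero m p α)
    (hqp : bil D q p = 1) (i : Fin s) (v : (i : Fin s) → Fin (m i) → Fin D) :
    α v = ∑ j, ∑ ρ, plow D p (v i j) * q ρ * α (update v i (update (v i) j ρ)) := by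
  have hk : ∀ ρ, ∑ k, (if k = 0 then 1 else -1) * plow D p (Fin.cons ρ (v i) k) *
      α (update v i ((Fin.cons ρ (v i) : Fin (m i + 1) → Fin D) ∘ fun a => swap 0 k a.succ))
      = 0 := fun ρ => by
    set c : Fin (m i + 1) → Fin D := Fin.cons ρ (v i)
    have h := (sum_perm_sign_mul_eq_factorial_mul (fun k => plow D p (c k))
      (fun u => α (update v i (c ∘ u)))
      (fun τ u => hα.apply_update_comp v i (c ∘ u) τ)).symm.trans (hw i v ρ)
    exact (mul_eq_zero.mp h).resolve_left (Nat.cast_ne_zero.mpr (Nat.factorial_ne_zero _))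
  calc α v = ∑ ρ, q ρ * plow D p ρ * α v := by
        rw [← sum_mul, ← bil_eq_sum_mul_plow, hqp, one_mul]
    _ = ∑ ρ, ∑ j, plow D p (v i j) * q ρ * α (update v i (update (v i) j ρ)) :=
        sum_congr rfl fun ρ _ => by
          have htail : ((Fin.cons ρ (v i) : Fin (m i + 1) → Fin D) ∘ fun a => (swap 0 0) a.succ)
              = v i := by
            ext a
            simp
          have h := hk ρ
          simp only [Fin.sum_univ_succ, htail, Fin.cons_comp_swap_zero_succ, Fin.succ_ne_zero,
            if_false, if_true, update_eq_self, Fin.cons_zero, Fin.cons_succ, neg_mul, one_mul,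
            sum_neg_distrib] at h
          rw [mul_assoc, add_neg_eq_zero.mp h, mul_sum]
          exact sum_congr rfl fun j _ => by ring
    _ = _ := sum_comm

lemma WedgeZero.eq_sum_prod_plow_mul (hα : ColAntisym m α) {p q : Fin D → ℝ}
    (hw : WedgeZero m p α) (hqp : bil D q p = 1) (v : (i : Fin s) → Fin (m i) → Fin D) :
    α v = ∑ J : ∀ i, Fin (m i), ∑ μ : Fin s → Fin D,
      (∏ i, plow D p (v i (J i)) * q (μ i)) * α fun i => update (v i) (J i) (μ i) := by
  rw [eq_sum_prod_of_eq_sum_update (M := fun i => Fin (m i) × Fin D)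
    (fun _ c x => plow D p (c x.1) * q x.2) (fun _ c x => update c x.1 x.2) α (fun i v => by
      rw [Fintype.sum_prod_type]
      exact hw.eq_sum_plow_mul hα hqp i v) v,
    ← Equiv.sum_comp (Equiv.arrowProdEquivProdArrow _ _ _).symm, Fintype.sum_prod_type]
  rfl

end Conditions

variable {m : Fin s → ℕ}

def contractAll (q : Fin D → ℝ) (α : MF D s fun i => m i + 1) : MF D s m :=
  fun u => ∑ μ : Fin s → Fin D, (∏ i, q (μ i)) * α fun i => Fin.cons (μ i) (u i)

lemma cons_update_eq_update_cons (μ : Fin s → Fin D) (u : (i : Fin s) → Fin (m i) → Fin D)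
    (i : Fin s) (w : Fin (m i) → Fin D) :
    (fun j => (Fin.cons (μ j) (update u i w j) : Fin (m j + 1) → Fin D))
      = update (fun j => Fin.cons (μ j) (u j)) i (Fin.cons (μ i) w) :=
  funext fun j => apply_update (fun j => (Fin.cons (μ j) : _ → Fin (m j + 1) → Fin D)) u i w j

variable {α : MF D s fun i => m i + 1}

lemma colAntisym_contractAll (hα : ColAntisym (fun i => m i + 1) α) (q : Fin D → ℝ) :
    ColAntisym m (contractAll q α) := by
  intro i τ u
  simp only [contractAll, mul_sum]
  refine sum_congr rfl fun μ _ => ?_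
  have hcons : (Fin.cons (μ i) fun a => u i (τ a) : Fin (m i + 1) → Fin D)
      = Fin.cons (μ i) (u i) ∘ Perm.decomposeFin.symm (0, τ) := by
    ext k
    refine Fin.cases ?_ (fun a => ?_) k <;> simp
  rw [cons_update_eq_update_cons, hcons, hα.apply_update_comp, Perm.decomposeFin.symm_sign,
    if_pos rfl, one_mul, update_eq_self]
  ring

lemma slotTransverse_contractAll_of_contractZero {hm : ∀ i, 0 < m i + 1} {p : Fin D → ℝ}
    (hα : ColAntisym (fun i => m i + 1) α) (hc : ContractZero (fun i => m i + 1) hm p α)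
    (q : Fin D → ℝ) : SlotTransverse m p (contractAll q α) := by
  intro i a u
  simp only [contractAll, mul_sum]
  rw [sum_comm]
  refine sum_eq_zero fun μ _ => ?_
  simp only [cons_update_eq_update_cons, Fin.cons_update, mul_left_comm (p _), ← mul_sum]
  exact mul_eq_zero_of_right _ (hc.sum_mul_apply_update hα _ i a.succ)

/-- The summand is odd under exchanging the contracted index `ρ` with the index `μ i`. -/
lemma slotTransverse_contractAll_self (hα : ColAntisym (fun i => m i + 1) α)
    (q : Fin D → ℝ) : SlotTransverse m q (contractAll q α) := by
  intro i a u
  simp only [contractAll, mul_sum]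
  rw [sum_comm]
  set F : (Fin s → Fin D) → Fin D → ℝ := fun μ ρ =>
    q ρ * ((∏ j, q (μ j)) * α fun j => Fin.cons (μ j) (update u i (update (u i) a ρ) j))
  have hF : ∀ μ ρ, F (update μ i ρ) (μ i) = -F μ ρ := by
    intro μ ρ
    set U : (j : Fin s) → Fin (m j + 1) → Fin D :=
      fun j => Fin.cons (μ j) (update u i (update (u i) a ρ) j)
    have hprod : q (μ i) * ∏ j, q (update μ i ρ j) = q ρ * ∏ j, q (μ j) := by
      rw [Fintype.prod_eq_mul_prod_compl i, Fintype.prod_eq_mul_prod_compl i (fun j => q (μ j)),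
        update_self, prod_congr rfl fun j hj => by rw [update_of_ne (by simpa using hj)]]
      ring
    have harg : (fun j => (Fin.cons (update μ i ρ j) (update u i (update (u i) a (μ i)) j) :
        Fin (m j + 1) → Fin D)) = update U i (U i ∘ swap 0 a.succ) := by
      ext j : 1
      by_cases hj : j = i
      · subst hj
        simp only [U, update_self, Fin.cons_update_comp_swap]
      · simp [U, hj]
    simp only [F]
    rw [harg, hα.apply_update_comp_swap _ _ _ (Fin.succ_ne_zero a).symm, update_eq_self]
    linear_combination (-α U) * hprod
  have h := sum_sum_update_swap i F
  simp only [hF, sum_neg_distrib] at h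
  have hzero : ∑ μ, ∑ ρ, F μ ρ = 0 := by linarith
  exact hzero

lemma wedgeAll_contractAll (hα : ColAntisym (fun i => m i + 1) α) (hm : ∀ i, 0 < m i + 1)
    (p q : Fin D → ℝ) (v : (i : Fin s) → Fin (m i + 1) → Fin D) :
    wedgeAll (fun i => m i + 1) hm p (contractAll q α) v
      = ∑ J : ∀ i, Fin (m i + 1), ∑ μ : Fin s → Fin D,
          (∏ i, plow D p (v i (J i)) * q (μ i)) * α fun i => update (v i) (J i) (μ i) := by
  set G : (∀ i, Fin (m i + 1)) → ℝ := fun J => ∑ μ : Fin s → Fin D,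
    (∏ i, plow D p (v i (J i)) * q (μ i)) * α fun i => update (v i) (J i) (μ i)
  have hterm : ∀ σ : ∀ i, Perm (Fin (m i + 1)),
      (∏ i, ((Perm.sign (σ i) : ℤ) : ℝ)) * (∏ i, plow D p (v i (σ i 0))) *
        contractAll q α (fun i a => v i (σ i a.succ)) = G fun i => σ i 0 := by
    intro σ
    have hsq : (∏ i, ((Perm.sign (σ i) : ℤ) : ℝ)) * ∏ i, ((Perm.sign (σ i) : ℤ) : ℝ) = 1 := by
      rw [← prod_mul_distrib]
      exact prod_eq_one fun i _ => sign_cast_mul_self (σ i)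
    simp only [contractAll, mul_sum]
    refine sum_congr rfl fun μ _ => ?_
    rw [funext fun i => Fin.cons_comp_succ_eq_update_comp (μ i) (v i) (σ i), hα.apply_comp,
      prod_mul_distrib]
    linear_combination ((∏ i, plow D p (v i (σ i 0))) * (∏ i, q (μ i)) *
      α fun i => update (v i) (σ i 0) (μ i)) * hsq
  have hfac : (∏ i, ((m i).factorial : ℝ))⁻¹ * ∏ i, ((m i).factorial : ℝ) = 1 :=
    inv_mul_cancel₀ (prod_ne_zero_iff.mpr fun i _ => Nat.cast_ne_zero.mpr (Nat.factorial_ne_zero _))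
  calc wedgeAll (fun i => m i + 1) hm p (contractAll q α) v
      = (∏ i, ((m i).factorial : ℝ))⁻¹ * ∑ σ : ∀ i, Perm (Fin (m i + 1)), G fun i => σ i 0 := by
        simp only [wedgeAll, Nat.add_sub_cancel]
        exact congrArg _ (sum_congr rfl fun σ _ => hterm σ)
    _ = ∑ J, G J := by
        rw [sum_pi_perm_apply_zero, nsmul_eq_mul, Nat.cast_prod, ← mul_assoc, hfac, one_mul]

end Multiforms

/-- light-cone Lemma: let `p` be a nonzero light-like vector in Minkowski
space and `α` a multiform of multidegree `(ℓ₁,…,ℓ_s)`, all `ℓᵢ > 0`, with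
`p̄ᵢ α = 0` and `p̄ᵢ† α = 0` for all `i`. Then there is a second null vector `q` with
`η(p,q) = 1`, whose associated transverse subspace `V⊥` has dimension `D − 2`, and a
multiform `β` of multidegree `(ℓ₁−1,…,ℓ_s−1)` taking values in `∧(V⊥)` (all of its
indices transverse to `p` and `q`) such that `α = p̄₁ p̄₂ ⋯ p̄ₛ β`. -/
theorem lightcone_lemma {D s : ℕ} (ℓ : Fin s → ℕ) (hℓ : ∀ i, 0 < ℓ i)
    (p : Fin D → ℝ) (hp : p ≠ 0) (hnull : bil D p p = 0)
    (α : MF D s ℓ)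
    (hcol : ColAntisym ℓ α)
    (hw : WedgeZero ℓ p α)
    (hc : ContractZero ℓ hℓ p α) :
    ∃ q : Fin D → ℝ, bil D q q = 0 ∧ bil D p q = 1 ∧
      Module.finrank ℝ (perpSpace D p q) = D - 2 ∧
      ∃ β : MF D s (fun i => ℓ i - 1),
        ColAntisym (fun i => ℓ i - 1) β ∧
        SlotTransverse (fun i => ℓ i - 1) p β ∧
        SlotTransverse (fun i => ℓ i - 1) q β ∧
        α = wedgeAll ℓ hℓ p β := by
  -- With `ℓ = m + 1`, the degree `ℓ i - 1` of `β` reduces to `m i` definitionally.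
  obtain ⟨m, rfl⟩ : ∃ m : Fin s → ℕ, ℓ = fun i => m i + 1 :=
    ⟨fun i => ℓ i - 1, funext fun i => (Nat.sub_add_cancel (hℓ i)).symm⟩
  obtain ⟨q, hqq, hpq⟩ := exists_null_bil_eq_one hp hnull
  have hqp : bil D q p = 1 := by rw [bil_comm, hpq]
  refine ⟨q, hqq, hpq, finrank_perpSpace hnull hqq hpq, contractAll q α,
    colAntisym_contractAll hcol q, slotTransverse_contractAll_of_contractZero hcol hc q,
    slotTransverse_contractAll_self hcol q, funext fun v => ?_⟩
  exact (hw.eq_sum_prod_plow_mul hcol hqp v).trans (wedgeAll_contractAll hcol hℓ p q v).symm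

end Stmt15
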